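/- arXiv:2511.05900 — 5 statements merged into one kernel-verified Lean document; each statement's English description precedes it below -/
import Mathlib

section
/- Let a be a positive real number and let α : [0,a) → ℝ be a locally Lipschitz class K function. Let x : [0,∞) → ℝⁿ be a continuously differentiable curve and let V : ℝⁿ × [0,∞) → [0,∞) be continuously differentiable, with V(x(0),0) < a. Suppose that for all t ≥ 0, ∇ₓV(x(t),t)·ẋ(t) + ∂V/∂t(x(t),t) + α(V(x(t),t)) ≤ 0. Then V(x(t),t) → 0 as t → ∞. -/
/-!
Along the trajectory, `v(t) = V(x(t), t)` satisfies `v' ≤ -α(v)`. For `0 < m < a` the sublevel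
set `{v ≤ m}` is forward invariant, since on its boundary `v' ≤ -α(m) < 0`. In particular `v`
stays below `v(0) < a`, so a bound `v ≥ δ > 0` on `[0, ∞)` would give `v' ≤ -α(δ) < 0` and make
`v` eventually negative. Hence `v` drops below every `δ > 0`, and by invariance stays there.
-/

/-- `α` is a class `K` function on `[0, a)`: continuous, strictly increasing, `α 0 = 0`. -/
def IsClassKOn (a : ℝ) (α : ℝ → ℝ) : Prop :=
  ContinuousOn α (Set.Ico 0 a) ∧ StrictMonoOn α (Set.Ico 0 a) ∧ α 0 = 0

open Filter Topology

section ClassK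

variable {a : ℝ} {α : ℝ → ℝ}

theorem IsClassKOn.pos (hK : IsClassKOn a α) {r : ℝ} (hr : 0 < r) (hra : r < a) : 0 < α r :=
  hK.2.2 ▸ hK.2.1 ⟨le_rfl, hr.trans hra⟩ ⟨hr.le, hra⟩ hr

theorem IsClassKOn.apply_le_apply (hK : IsClassKOn a α) {r s : ℝ} (hr : 0 ≤ r) (hrs : r ≤ s)
    (hsa : s < a) : α r ≤ α s :=
  hK.2.1.monotoneOn ⟨hr, hrs.trans_lt hsa⟩ ⟨hr.trans hrs, hsa⟩ hrs

end ClassK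

section Decay

variable {a : ℝ} {α v v' : ℝ → ℝ}

theorem le_of_deriv_le_neg_classK (hK : IsClassKOn a α)
    (hv : ∀ t, 0 ≤ t → HasDerivAt v (v' t) t) (hdecay : ∀ t, 0 ≤ t → v' t ≤ -α (v t))
    {s m t : ℝ} (hs : 0 ≤ s) (hsm : v s ≤ m) (hm : 0 < m) (hma : m < a) (hst : s ≤ t) :
    v t ≤ m := by
  refine image_le_of_deriv_right_lt_deriv_boundary (B := fun _ => m) (B' := fun _ => 0)
    (fun r hr => (hv r (hs.trans hr.1)).continuousAt.continuousWithinAt)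
    (fun r hr => (hv r (hs.trans hr.1)).hasDerivWithinAt) hsm (fun _ => hasDerivAt_const _ _)
    (fun r hr hrm => ?_) ⟨hst, le_rfl⟩
  have := hdecay r (hs.trans hr.1)
  rw [hrm] at this
  linarith [hK.pos hm hma]

theorem exists_le_of_deriv_le_neg_classK (hK : IsClassKOn a α)
    (hv : ∀ t, 0 ≤ t → HasDerivAt v (v' t) t) (hdecay : ∀ t, 0 ≤ t → v' t ≤ -α (v t))
    (h0a : v 0 < a) {δ : ℝ} (hδ : 0 < δ) (hδa : δ < a) : ∃ s, 0 ≤ s ∧ v s ≤ δ := by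
  by_contra! hgt
  have hv0 : δ < v 0 := hgt 0 le_rfl
  have hlt_a : ∀ t, 0 ≤ t → v t < a := fun t ht =>
    (le_of_deriv_le_neg_classK hK hv hdecay le_rfl le_rfl (hδ.trans hv0) h0a ht).trans_lt h0a
  have hαδ : 0 < α δ := hK.pos hδ hδa
  set T := v 0 / α δ
  have hT : 0 ≤ T := div_nonneg (hδ.trans hv0).le hαδ.le
  -- compare `v` with the line of slope `-α δ` through `(0, v 0)`, which reaches `0` at time `T`
  have hline : v T ≤ v 0 - α δ * T := by
    refine image_le_of_deriv_right_le_deriv_boundary (B := fun t => v 0 - α δ * t)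
      (B' := fun _ => -α δ) (fun r hr => (hv r hr.1).continuousAt.continuousWithinAt)
      (fun r hr => (hv r hr.1).hasDerivWithinAt) (by simp) (by fun_prop)
      (fun r _ => ?_) (fun r hr => ?_) ⟨hT, le_rfl⟩
    · simpa using ((hasDerivAt_id r).const_mul (α δ)).const_sub (v 0) |>.hasDerivWithinAt
    · linarith [hdecay r hr.1, hK.apply_le_apply hδ.le (hgt r hr.1).le (hlt_a r hr.1)]
  have : α δ * T = v 0 := mul_div_cancel₀ _ hαδ.ne'
  linarith [hgt T hT]

theorem tendsto_zero_of_deriv_le_neg_classK (hK : IsClassKOn a α)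
    (hv : ∀ t, 0 ≤ t → HasDerivAt v (v' t) t) (hdecay : ∀ t, 0 ≤ t → v' t ≤ -α (v t))
    (hnonneg : ∀ t, 0 ≤ t → 0 ≤ v t) (h0a : v 0 < a) : Tendsto v atTop (𝓝 0) := by
  have ha : 0 < a := (hnonneg 0 le_rfl).trans_lt h0a
  refine Metric.tendsto_atTop.2 fun ε hε => ?_
  set δ := min (ε / 2) (a / 2)
  have hδ : 0 < δ := lt_min (half_pos hε) (half_pos ha)
  have hδa : δ < a := (min_le_right _ _).trans_lt (half_lt_self ha)
  obtain ⟨s, hs, hvs⟩ := exists_le_of_deriv_le_neg_classK hK hv hdecay h0a hδ hδa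
  refine ⟨s, fun t hst => ?_⟩
  have hvt := le_of_deriv_le_neg_classK hK hv hdecay hs hvs hδ hδa hst
  rw [Real.dist_0_eq_abs, abs_of_nonneg (hnonneg t (hs.trans hst))]
  linarith [min_le_left (ε / 2) (a / 2)]

end Decay

theorem hasDerivAt_comp_prodMk_self {E F : Type*} [NormedAddCommGroup E] [NormedSpace ℝ E]
    [NormedAddCommGroup F] [NormedSpace ℝ F] {x : ℝ → E} {V : E × ℝ → F} {t : ℝ}
    (hx : DifferentiableAt ℝ x t) (hV : DifferentiableAt ℝ V (x t, t)) :
    HasDerivAt (fun s => V (x s, s)) (fderiv ℝ V (x t, t) (deriv x t, 1)) t :=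
  hV.hasFDerivAt.comp_hasDerivAt (f := fun s => (x s, s)) t (hx.hasDerivAt.prodMk (hasDerivAt_id t))

theorem tv_clf_convergence_general {n : ℕ} {a : ℝ} {α : ℝ → ℝ}
    (hK : IsClassKOn a α)
    {x : ℝ → EuclideanSpace ℝ (Fin n)} (hx : ContDiff ℝ 1 x)
    {V : EuclideanSpace ℝ (Fin n) × ℝ → ℝ} (hV : ContDiff ℝ 1 V)
    (hVnonneg : ∀ p, 0 ≤ V p) (hV0 : V (x 0, 0) < a)
    (hdecr : ∀ t, 0 ≤ t →
      fderiv ℝ V (x t, t) (deriv x t, 1) + α (V (x t, t)) ≤ 0) :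
    Filter.Tendsto (fun t => V (x t, t)) Filter.atTop (nhds 0) :=
  tendsto_zero_of_deriv_le_neg_classK hK
    (fun t _ => hasDerivAt_comp_prodMk_self (hx.differentiable one_ne_zero t)
      (hV.differentiable one_ne_zero _))
    (fun t ht => by linarith [hdecr t ht]) (fun _ _ => hVnonneg _) hV0

/-- **Lemma 3.1 (TV-CLF convergence along a trajectory).**
If `V` is a continuously differentiable nonnegative function with `V (x 0, 0) < a`, `α` is a
locally Lipschitz class `K` function on `[0, a)`, `x` is a `C¹` curve, and for all `t ≥ 0`
the total derivative `∇ₓV(x(t),t)·ẋ(t) + ∂V/∂t(x(t),t)` (expressed via the Fréchet derivative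
of `V` applied to `(ẋ(t), 1)`) satisfies
`∇ₓV(x(t),t)·ẋ(t) + ∂V/∂t(x(t),t) + α(V(x(t),t)) ≤ 0`,
then `V(x(t),t) → 0` as `t → ∞`. -/
theorem tv_clf_convergence {n : ℕ} {a : ℝ} (ha : 0 < a) {α : ℝ → ℝ}
    (hK : IsClassKOn a α) (hLip : LocallyLipschitzOn (Set.Ico 0 a) α)
    {x : ℝ → EuclideanSpace ℝ (Fin n)} (hx : ContDiff ℝ 1 x)
    {V : EuclideanSpace ℝ (Fin n) × ℝ → ℝ} (hV : ContDiff ℝ 1 V)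
    (hVnonneg : ∀ p, 0 ≤ V p) (hV0 : V (x 0, 0) < a)
    (hdecr : ∀ t, 0 ≤ t →
      fderiv ℝ V (x t, t) (deriv x t, 1) + α (V (x t, t)) ≤ 0) :
    Filter.Tendsto (fun t => V (x t, t)) Filter.atTop (nhds 0) :=
  tv_clf_convergence_general hK hx hV hVnonneg hV0 hdecr
end

section
/- Let I be a finite nonempty index set, and for each i ∈ I let xᵢ : [0,∞) → ℝ^{nᵢ} be a continuously differentiable curve; write x(t) for the tuple (xᵢ(t))_{i∈I}. For each i ∈ I let Vᵢ : (∏_{i∈I} ℝ^{nᵢ}) × [0,∞) → [0,∞) be continuously differentiable, set V = ∑_{i∈I} Vᵢ, and assume V(x(0),0) < a. Let α : [0,a) → ℝ be a locally Lipschitz subadditive class K function. Suppose that for every i ∈ I and every t ≥ 0, ∇_{xᵢ}V(x(t),t)·ẋᵢ(t) + ∂Vᵢ/∂t(x(t),t) + α(Vᵢ(x(t),t)) ≤ 0. Then V(x(t),t) → 0 as t → ∞. -/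
/-- `α` is subadditive on `[0, a)`: `α (s + r) ≤ α s + α r` whenever `s, r, s + r ∈ [0, a)`. -/
def SubadditiveOn (a : ℝ) (α : ℝ → ℝ) : Prop :=
  ∀ s r : ℝ, s ∈ Set.Ico 0 a → r ∈ Set.Ico 0 a → s + r ∈ Set.Ico 0 a →
    α (s + r) ≤ α s + α r

open Finset Set Filter Topology

theorem SubadditiveOn.apply_sum_le {ι : Type*} {a : ℝ} {α : ℝ → ℝ} (hsub : SubadditiveOn a α)
    (hα0 : α 0 = 0) {f : ι → ℝ} (hf : ∀ i, 0 ≤ f i) (s : Finset ι) (hs : ∑ i ∈ s, f i < a) :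
    α (∑ i ∈ s, f i) ≤ ∑ i ∈ s, α (f i) := by
  classical
  induction s using Finset.induction_on with
  | empty => simp [hα0]
  | insert i s his ih =>
    simp only [sum_insert his] at hs ⊢
    have hsum_s : 0 ≤ ∑ j ∈ s, f j := sum_nonneg fun j _ => hf j
    have hsum_lt : ∑ j ∈ s, f j < a := by linarith [hf i]
    calc α (f i + ∑ j ∈ s, f j) ≤ α (f i) + α (∑ j ∈ s, f j) :=
          hsub _ _ ⟨hf i, by linarith⟩ ⟨hsum_s, hsum_lt⟩ ⟨by linarith [hf i], hs⟩
      _ ≤ α (f i) + ∑ j ∈ s, α (f j) := by linarith [ih hsum_lt]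

theorem continuousOn_Icc_of_hasDerivAt {W W' : ℝ → ℝ} (hW : ∀ t, 0 ≤ t → HasDerivAt W (W' t) t)
    (T : ℝ) : ContinuousOn W (Icc 0 T) :=
  fun t ht => (hW t ht.1).continuousAt.continuousWithinAt

namespace IsClassKOn

variable {a : ℝ} {α W W' : ℝ → ℝ}

theorem nonneg (hK : IsClassKOn a α) {y : ℝ} (hy : y ∈ Ico 0 a) : 0 ≤ α y :=
  hK.2.2 ▸ hK.2.1.monotoneOn ⟨le_rfl, hy.1.trans_lt hy.2⟩ hy hy.1

theorem pos_s7 (hK : IsClassKOn a α) {y : ℝ} (hy : y ∈ Ioo 0 a) : 0 < α y :=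
  hK.2.2 ▸ hK.2.1 ⟨le_rfl, hy.1.trans hy.2⟩ (Ioo_subset_Ico_self hy) hy.1

/-- A level `c` strictly between `W 0` and `a` is never reached, since `W' ≤ -α c < 0` wherever
`W = c`. -/
theorem lt_of_hasDerivAt_le_neg (hK : IsClassKOn a α) (hW : ∀ t, 0 ≤ t → HasDerivAt W (W' t) t)
    (hW0 : 0 ≤ W 0) (h0 : W 0 < a) (hdec : ∀ t, 0 ≤ t → W t < a → W' t ≤ -α (W t))
    {t : ℝ} (ht : 0 ≤ t) : W t < a := by
  obtain ⟨c, hW0c, hca⟩ := exists_between h0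
  have hc : c ∈ Ioo 0 a := ⟨hW0.trans_lt hW0c, hca⟩
  have hWc : W t ≤ c := by
    refine image_le_of_deriv_right_lt_deriv_boundary (continuousOn_Icc_of_hasDerivAt hW t)
      (fun s hs => (hW s hs.1).hasDerivWithinAt) hW0c.le (fun _ => hasDerivAt_const _ c)
      (fun s hs hWs => ?_) ⟨ht, le_rfl⟩
    have hW's : W' s ≤ -α c := hWs ▸ hdec s hs.1 (hWs ▸ hc.2)
    linarith [hK.pos_s7 hc]
  exact hWc.trans_lt hca

theorem antitoneOn_of_hasDerivAt_le_neg (hK : IsClassKOn a α)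
    (hW : ∀ t, 0 ≤ t → HasDerivAt W (W' t) t) (hnn : ∀ t, 0 ≤ t → 0 ≤ W t) (h0 : W 0 < a)
    (hdec : ∀ t, 0 ≤ t → W t < a → W' t ≤ -α (W t)) : AntitoneOn W (Ici 0) := by
  refine antitoneOn_of_hasDerivWithinAt_nonpos (convex_Ici 0)
    (fun t ht => (hW t ht).continuousAt.continuousWithinAt)
    (fun t ht => (hW t (interior_subset ht)).hasDerivWithinAt) fun t ht => ?_
  have ht : 0 ≤ t := interior_subset ht
  have hlt := hK.lt_of_hasDerivAt_le_neg hW (hnn 0 le_rfl) h0 hdec ht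
  linarith [hdec t ht hlt, hK.nonneg ⟨hnn t ht, hlt⟩]

/-- If `W ≥ ε` forever, then `W' ≤ -α ε < 0` forever and `W` would become negative. -/
theorem exists_lt_of_hasDerivAt_le_neg (hK : IsClassKOn a α)
    (hW : ∀ t, 0 ≤ t → HasDerivAt W (W' t) t) (hnn : ∀ t, 0 ≤ t → 0 ≤ W t) (h0 : W 0 < a)
    (hdec : ∀ t, 0 ≤ t → W t < a → W' t ≤ -α (W t)) {ε : ℝ} (hε : 0 < ε) :
    ∃ t, 0 ≤ t ∧ W t < ε := by
  by_contra! hge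
  have hlt : ∀ t, 0 ≤ t → W t < a := fun t ht =>
    hK.lt_of_hasDerivAt_le_neg hW (hnn 0 le_rfl) h0 hdec ht
  have hεa : ε < a := (hge 0 le_rfl).trans_lt h0
  have hαε : 0 < α ε := hK.pos_s7 ⟨hε, hεa⟩
  set T := W 0 / α ε + 1
  have hT : 0 ≤ T := by positivity [hnn 0 le_rfl]
  have hWT : W T ≤ W 0 - α ε * T := by
    refine image_le_of_deriv_right_le_deriv_boundary (continuousOn_Icc_of_hasDerivAt hW T)
      (fun s hs => (hW s hs.1).hasDerivWithinAt) (by simp)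
      (by fun_prop) (fun s _ => ((hasDerivAt_id s).const_mul (α ε)).const_sub (W 0)
        |>.hasDerivWithinAt) (fun s hs => ?_) ⟨hT, le_rfl⟩
    have hmono : α ε ≤ α (W s) :=
      hK.2.1.monotoneOn ⟨hε.le, hεa⟩ ⟨hnn s hs.1, hlt s hs.1⟩ (hge s hs.1)
    linarith [hdec s hs.1 (hlt s hs.1)]
  have : α ε * T = W 0 + α ε := by
    rw [mul_add, mul_one, mul_div_cancel₀ _ hαε.ne']
  linarith [hnn T hT]

theorem tendsto_zero_of_hasDerivAt_le_neg (hK : IsClassKOn a α)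
    (hW : ∀ t, 0 ≤ t → HasDerivAt W (W' t) t) (hnn : ∀ t, 0 ≤ t → 0 ≤ W t) (h0 : W 0 < a)
    (hdec : ∀ t, 0 ≤ t → W t < a → W' t ≤ -α (W t)) : Tendsto W atTop (𝓝 0) := by
  have hanti := hK.antitoneOn_of_hasDerivAt_le_neg hW hnn h0 hdec
  refine tendsto_order.2 ⟨fun b hb => ?_, fun ε hε => ?_⟩
  · filter_upwards [eventually_ge_atTop 0] with t ht using hb.trans_le (hnn t ht)
  · obtain ⟨t₀, ht₀, hWt₀⟩ := hK.exists_lt_of_hasDerivAt_le_neg hW hnn h0 hdec hε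
    filter_upwards [eventually_ge_atTop t₀] with t ht
    exact (hanti ht₀ (ht₀.trans ht) ht).trans_lt hWt₀

end IsClassKOn

theorem fderiv_sum_apply_eq_sum {ι : Type*} [Fintype ι] [DecidableEq ι] {E : ι → Type*}
    [∀ i, NormedAddCommGroup (E i)] [∀ i, NormedSpace ℝ (E i)] {G : Type*}
    [NormedAddCommGroup G] [NormedSpace ℝ G] {V : ι → (∀ i, E i) × ℝ → G} {p : (∀ i, E i) × ℝ}
    (hV : ∀ i, DifferentiableAt ℝ (V i) p) (v : ∀ i, E i) :
    fderiv ℝ (fun q => ∑ j, V j q) p (v, 1) =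
      ∑ i, (fderiv ℝ (fun q => ∑ j, V j q) p (Pi.single i (v i), 0) + fderiv ℝ (V i) p (0, 1)) := by
  have hsplit : ((v, 1) : (∀ i, E i) × ℝ) = ∑ i, (Pi.single i (v i), 0) + (0, 1) := by
    ext <;> simp [Prod.fst_sum, Prod.snd_sum, Finset.univ_sum_single]
  rw [hsplit, map_add, map_sum, sum_add_distrib, fderiv_fun_sum fun i _ => hV i]
  simp only [_root_.sum_apply]

theorem disentangled_convergence_general {ι : Type*} [Fintype ι] [DecidableEq ι]
    {n : ι → ℕ} {a : ℝ} {α : ℝ → ℝ}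
    (hK : IsClassKOn a α)
    (hsub : SubadditiveOn a α)
    {x : ℝ → ∀ i, EuclideanSpace ℝ (Fin (n i))} (hx : ContDiff ℝ 1 x)
    {V : ι → ((∀ i, EuclideanSpace ℝ (Fin (n i))) × ℝ) → ℝ}
    (hV : ∀ i, ContDiff ℝ 1 (V i)) (hVnn : ∀ i p, 0 ≤ V i p)
    (hV0 : (∑ j, V j (x 0, 0)) < a)
    (hcon : ∀ i, ∀ t, 0 ≤ t →
      fderiv ℝ (fun p => ∑ j, V j p) (x t, t) (Pi.single i (deriv x t i), (0:ℝ)) +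
        fderiv ℝ (V i) (x t, t) (0, 1) + α (V i (x t, t)) ≤ 0) :
    Filter.Tendsto (fun t => ∑ j, V j (x t, t)) Filter.atTop (nhds 0) := by
  have hVd : ∀ i p, DifferentiableAt ℝ (V i) p := fun i => (hV i).differentiable one_ne_zero
  have hVsum : ContDiff ℝ 1 fun p => ∑ j, V j p := ContDiff.sum fun j _ => hV j
  have hderiv : ∀ t, HasDerivAt (fun s => ∑ j, V j (x s, s))
      (fderiv ℝ (fun p => ∑ j, V j p) (x t, t) (deriv x t, 1)) t := fun t =>
    ((hVsum.differentiable one_ne_zero) _).hasFDerivAt.comp_hasDerivAt t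
      (((hx.differentiable one_ne_zero) t).hasDerivAt.prodMk (hasDerivAt_id t))
  refine hK.tendsto_zero_of_hasDerivAt_le_neg (fun t _ => hderiv t)
    (fun t _ => sum_nonneg fun j _ => hVnn j _) hV0 fun t ht hlt => ?_
  calc fderiv ℝ (fun p => ∑ j, V j p) (x t, t) (deriv x t, 1)
      = ∑ i, (fderiv ℝ (fun p => ∑ j, V j p) (x t, t) (Pi.single i (deriv x t i), 0) +
          fderiv ℝ (V i) (x t, t) (0, 1)) := fderiv_sum_apply_eq_sum (fun i => hVd i _) _
    _ ≤ ∑ i, -α (V i (x t, t)) := sum_le_sum fun i _ => by linarith [hcon i t ht]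
    _ ≤ -α (∑ j, V j (x t, t)) := by
      rw [sum_neg_distrib, neg_le_neg_iff]
      exact hsub.apply_sum_le hK.2.2 (fun i => hVnn i _) _ hlt

/-- **Disentanglement theorem for private-entangled Lyapunov functions (Theorem 4.2, smooth
case).** With `V = ∑ i, Vᵢ`, `V(x(0),0) < a`, and a locally Lipschitz subadditive class `K`
function `α` on `[0, a)`, if each agent `i` enforces, for every `t ≥ 0`,
`∇_{xᵢ}V(x(t),t)·ẋᵢ(t) + ∂Vᵢ/∂t(x(t),t) + α(Vᵢ(x(t),t)) ≤ 0`,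
then `V(x(t),t) → 0` as `t → ∞`. -/
theorem disentangled_convergence {ι : Type*} [Fintype ι] [Nonempty ι] [DecidableEq ι]
    {n : ι → ℕ} {a : ℝ} (ha : 0 < a) {α : ℝ → ℝ}
    (hK : IsClassKOn a α) (hLip : LocallyLipschitzOn (Set.Ico 0 a) α)
    (hsub : SubadditiveOn a α)
    {x : ℝ → ∀ i, EuclideanSpace ℝ (Fin (n i))} (hx : ContDiff ℝ 1 x)
    {V : ι → ((∀ i, EuclideanSpace ℝ (Fin (n i))) × ℝ) → ℝ}
    (hV : ∀ i, ContDiff ℝ 1 (V i)) (hVnn : ∀ i p, 0 ≤ V i p)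
    (hV0 : (∑ j, V j (x 0, 0)) < a)
    (hcon : ∀ i, ∀ t, 0 ≤ t →
      fderiv ℝ (fun p => ∑ j, V j p) (x t, t) (Pi.single i (deriv x t i), (0:ℝ)) +
        fderiv ℝ (V i) (x t, t) (0, 1) + α (V i (x t, t)) ≤ 0) :
    Filter.Tendsto (fun t => ∑ j, V j (x t, t)) Filter.atTop (nhds 0) :=
  disentangled_convergence_general hK hsub hx hV hVnn hV0 hcon
end

section
/- Let γ : ℝ → ℝ be a locally Lipschitz, continuous, strictly increasing function with γ(0) = 0. Let x : [0,∞) → ℝⁿ be a continuously differentiable curve and h : ℝⁿ × [0,∞) → ℝ continuously differentiable, and suppose that for all t ≥ 0, ∇ₓh(x(t),t)·ẋ(t) + ∂h/∂t(x(t),t) + γ(h(x(t),t)) ≥ 0. If h(x(0),0) ≥ 0, then h(x(t),t) ≥ 0 for all t ≥ 0. -/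
/-!
Along the trajectory put `v t = h (x t, t)`. The hypothesis says `v' ≥ -γ ∘ v`, and since `γ` is
monotone with `γ 0 = 0`, this forces `v' ≥ 0` wherever `v < 0`. Such a function cannot become
negative once it is nonnegative: after the last time `s < t` with `v s ≥ 0`, `v` is monotone on
`[s, t]`, so `v t ≥ v s ≥ 0`.
-/

open Set

theorem nonneg_of_hasDerivAt_nonneg_of_neg {v v' : ℝ → ℝ} {a b : ℝ} (hab : a ≤ b)
    (hv : ContinuousOn v (Icc a b)) (hv' : ∀ t ∈ Ioo a b, HasDerivAt v (v' t) t)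
    (hneg : ∀ t ∈ Ioo a b, v t < 0 → 0 ≤ v' t) (ha : 0 ≤ v a) : 0 ≤ v b := by
  have hclosed : IsClosed (v ⁻¹' Ici 0 ∩ Icc a b) := by
    rw [inter_comm]; exact hv.preimage_isClosed_of_isClosed isClosed_Icc isClosed_Ici
  refine hclosed.mem_of_ge_of_forall_exists_gt ha hab fun s ⟨hvs, hs⟩ => ?_
  by_contra! hempty
  have hneg_after : ∀ t ∈ Ioc s b, v t < 0 := fun t ht =>
    not_le.mp fun hvt => hempty.subset ⟨hvt, ht⟩
  have hsub : Icc s b ⊆ Icc a b := Icc_subset_Icc_left hs.1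
  have hmono : MonotoneOn v (Icc s b) := by
    refine monotoneOn_of_hasDerivWithinAt_nonneg (f' := v') (convex_Icc s b) (hv.mono hsub)
      (fun t ht => ?_) fun t ht => ?_
    all_goals rw [interior_Icc] at ht
    · exact (hv' t ⟨hs.1.trans_lt ht.1, ht.2⟩).hasDerivWithinAt
    · exact hneg t ⟨hs.1.trans_lt ht.1, ht.2⟩ (hneg_after t (Ioo_subset_Ioc_self ht))
  exact (hneg_after b ⟨hs.2, le_rfl⟩).not_ge <|
    hvs.out.trans (hmono (left_mem_Icc.2 hs.2.le) (right_mem_Icc.2 hs.2.le) hs.2.le)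

theorem nonneg_of_hasDerivAt_add_comp_nonneg {γ v v' : ℝ → ℝ} (hγ : Monotone γ) (hγ0 : γ 0 = 0)
    (hv : ∀ t, 0 ≤ t → HasDerivAt v (v' t) t) (hbarrier : ∀ t, 0 ≤ t → 0 ≤ v' t + γ (v t))
    (h0 : 0 ≤ v 0) {t : ℝ} (ht : 0 ≤ t) : 0 ≤ v t := by
  refine nonneg_of_hasDerivAt_nonneg_of_neg ht
    (fun s hs => (hv s hs.1).continuousAt.continuousWithinAt) (fun s hs => hv s hs.1.le)
    (fun s hs hvs => ?_) h0
  have hγv : γ (v s) ≤ 0 := hγ0 ▸ hγ hvs.le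
  linarith [hbarrier s hs.1.le]

theorem tv_cbf_forward_invariance_general {n : ℕ} {γ : ℝ → ℝ}
    (hMono : StrictMono γ) (hγ0 : γ 0 = 0)
    {x : ℝ → EuclideanSpace ℝ (Fin n)} (hx : ContDiff ℝ 1 x)
    {h : EuclideanSpace ℝ (Fin n) × ℝ → ℝ} (hh : ContDiff ℝ 1 h)
    (hineq : ∀ t, 0 ≤ t →
      0 ≤ fderiv ℝ h (x t, t) (deriv x t, 1) + γ (h (x t, t)))
    (h0 : 0 ≤ h (x 0, 0)) :
    ∀ t, 0 ≤ t → 0 ≤ h (x t, t) := by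
  have hderiv : ∀ t, HasDerivAt (fun s => h (x s, s)) (fderiv ℝ h (x t, t) (deriv x t, 1)) t :=
    fun t => ((hh.differentiable one_ne_zero) _).hasFDerivAt.comp_hasDerivAt t
      (((hx.differentiable one_ne_zero) t).hasDerivAt.prodMk (hasDerivAt_id t))
  exact fun t ht => nonneg_of_hasDerivAt_add_comp_nonneg hMono.monotone hγ0
    (fun t _ => hderiv t) hineq h0 ht

/-- **Forward invariance part of Lemma 3.2 (time-varying control barrier functions).**
Let `γ : ℝ → ℝ` be locally Lipschitz, continuous, strictly increasing with `γ 0 = 0`,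
`x` a `C¹` curve, and `h` continuously differentiable. If for all `t ≥ 0`,
`∇ₓh(x(t),t)·ẋ(t) + ∂h/∂t(x(t),t) + γ(h(x(t),t)) ≥ 0` (the total derivative expressed via the
Fréchet derivative of `h` applied to `(ẋ(t), 1)`), and `h(x(0),0) ≥ 0`, then
`h(x(t),t) ≥ 0` for all `t ≥ 0`. -/
theorem tv_cbf_forward_invariance {n : ℕ} {γ : ℝ → ℝ}
    (hLip : LocallyLipschitz γ) (hCont : Continuous γ)
    (hMono : StrictMono γ) (hγ0 : γ 0 = 0)
    {x : ℝ → EuclideanSpace ℝ (Fin n)} (hx : ContDiff ℝ 1 x)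
    {h : EuclideanSpace ℝ (Fin n) × ℝ → ℝ} (hh : ContDiff ℝ 1 h)
    (hineq : ∀ t, 0 ≤ t →
      0 ≤ fderiv ℝ h (x t, t) (deriv x t, 1) + γ (h (x t, t)))
    (h0 : 0 ≤ h (x 0, 0)) :
    ∀ t, 0 ≤ t → 0 ≤ h (x t, t) :=
  tv_cbf_forward_invariance_general hMono hγ0 hx hh hineq h0
end

section
/- Let γ : ℝ → ℝ be a locally Lipschitz extended class K∞ function. Let x : [0,∞) → ℝⁿ be a continuously differentiable curve and h : ℝⁿ × [0,∞) → ℝ continuously differentiable, and suppose that for all t ≥ 0, ∇ₓh(x(t),t)·ẋ(t) + ∂h/∂t(x(t),t) + γ(h(x(t),t)) ≥ 0. If h(x(0),0) < 0, then h(x(t),t) ≥ z(t) for all t ≥ 0, where z is the unique solution of ż = −γ(z) with z(0) = h(x(0),0); in particular, liminf_{t→∞} h(x(t),t) ≥ 0. -/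
/-! Because `-γ` is nonincreasing, the comparison principle for `ż = -γ(z)` needs no Lipschitz
bound: a subsolution `z` cannot cross the strict supersolution `g + ε (1 + t)` of a supersolution
`g`, since where they touch `ż ≤ -γ(z) ≤ -γ(g) ≤ ġ < ġ + ε`; letting `ε → 0` gives `z ≤ g`.
Applied to `g(t) = h(x(t), t)` this is the first claim. For the liminf: while `g < -ε` it grows at
rate at least `-γ(-ε) > 0`, so it reaches `-ε` in finite time, and from then on the constant `-ε`
is a subsolution lying below it. -/

open Set Filter

theorem subsolution_le_supersolution_of_antitone {F : ℝ → ℝ} (hF : Antitone F) {a : ℝ}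
    {z z' g g' : ℝ → ℝ}
    (hz : ∀ t ∈ Ici a, HasDerivWithinAt z (z' t) (Ici a) t) (hz' : ∀ t ∈ Ici a, z' t ≤ F (z t))
    (hg : ∀ t ∈ Ici a, HasDerivWithinAt g (g' t) (Ici a) t) (hg' : ∀ t ∈ Ici a, F (g t) ≤ g' t)
    (ha : z a ≤ g a) {t : ℝ} (ht : a ≤ t) : z t ≤ g t := by
  have hcont {f f' : ℝ → ℝ} (hf : ∀ t ∈ Ici a, HasDerivWithinAt f (f' t) (Ici a) t) :
      ContinuousOn f (Icc a t) :=
    fun s hs => ((hf s hs.1).continuousWithinAt).mono Icc_subset_Ici_self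
  have hright {f f' : ℝ → ℝ} (hf : ∀ t ∈ Ici a, HasDerivWithinAt f (f' t) (Ici a) t) :
      ∀ s ∈ Ico a t, HasDerivWithinAt f (f' s) (Ici s) s :=
    fun s hs => (hf s hs.1).mono (Ici_subset_Ici.2 hs.1)
  have hfence : ∀ ε > 0, z t ≤ g t + ε * (1 + (t - a)) := by
    intro ε hε
    have hB : ∀ s ∈ Ici a, HasDerivWithinAt (fun s => g s + ε * (1 + (s - a)))
        (g' s + ε) (Ici a) s := fun s hs => by
      simpa using (hg s hs).fun_add
        ((((hasDerivAt_id' s).sub_const a).const_add 1).const_mul ε).hasDerivWithinAt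
    refine image_le_of_deriv_right_lt_deriv_boundary' (hcont hz) (hright hz)
      (by rw [sub_self, add_zero, mul_one]; linarith)
      (hcont hB) (hright hB) (fun s hs hzs => ?_) ⟨ht, le_rfl⟩
    have hgz : g s ≤ z s := by nlinarith [hs.1]
    calc z' s ≤ F (z s) := hz' s hs.1
      _ ≤ F (g s) := hF hgz
      _ ≤ g' s := hg' s hs.1
      _ < g' s + ε := by linarith
  refine le_of_forall_pos_le_add fun ε hε => ?_
  have hc : 0 < 1 + (t - a) := by linarith
  have := hfence (ε / (1 + (t - a))) (by positivity)
  rwa [div_mul_cancel₀ _ hc.ne'] at this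

theorem eventually_neg_le_of_neg_comp_le_deriv {γ : ℝ → ℝ} (hγ : StrictMono γ) (hγ0 : γ 0 = 0)
    {g g' : ℝ → ℝ} (hg : ∀ t, HasDerivAt g (g' t) t) (hg' : ∀ t ∈ Ici (0 : ℝ), -γ (g t) ≤ g' t)
    {ε : ℝ} (hε : 0 < ε) : ∀ᶠ t in atTop, -ε ≤ g t := by
  have hδ : 0 < -γ (-ε) := by
    have := hγ (neg_lt_zero.2 hε)
    rw [hγ0] at this
    linarith
  obtain ⟨T, hT0, hT⟩ : ∃ T, 0 ≤ T ∧ -ε ≤ g T := by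
    by_contra! hbelow
    have hgrowth : ∀ t, 0 ≤ t → g 0 + -γ (-ε) * t ≤ g t := fun t ht =>
      subsolution_le_supersolution_of_antitone (F := fun _ => -γ (-ε))
        (z := fun t => g 0 + -γ (-ε) * t) (z' := fun _ => -γ (-ε)) antitone_const
        (fun s _ => by simpa using ((hasDerivWithinAt_id s _).const_mul (-γ (-ε))).const_add (g 0))
        (fun _ _ => le_rfl) (fun s _ => (hg s).hasDerivWithinAt)
        (fun s hs => by linarith [hγ (hbelow s hs), hg' s hs]) (by simp) ht
    have := hgrowth (|g 0| / -γ (-ε)) (by positivity)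
    rw [mul_div_cancel₀ _ hδ.ne'] at this
    linarith [neg_abs_le (g 0), hbelow _ (by positivity : 0 ≤ |g 0| / -γ (-ε))]
  refine eventually_atTop.2 ⟨T, fun t ht => ?_⟩
  exact subsolution_le_supersolution_of_antitone hγ.monotone.neg
    (fun s _ => hasDerivWithinAt_const s _ (-ε)) (fun _ _ => hδ.le)
    (fun s _ => (hg s).hasDerivWithinAt) (fun s hs => hg' s (hT0.trans hs)) hT ht

theorem Real.liminf_nonneg_of_forall_eventually_neg_le {α : Type*} {l : Filter α} {f : α → ℝ}
    (hf : ∀ ε > 0, ∀ᶠ a in l, -ε ≤ f a) : 0 ≤ liminf f l := by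
  by_cases hc : IsCoboundedUnder (· ≥ ·) l f
  · exact le_of_forall_pos_le_add fun ε hε => by linarith [le_liminf_of_le hc (hf ε hε)]
  · exact (Real.liminf_of_not_isCoboundedUnder hc).ge

theorem tv_cbf_attractivity_general {n : ℕ} {γ : ℝ → ℝ}
    (hMono : StrictMono γ) (hγ0 : γ 0 = 0)
    {x : ℝ → EuclideanSpace ℝ (Fin n)} (hx : ContDiff ℝ 1 x)
    {h : EuclideanSpace ℝ (Fin n) × ℝ → ℝ} (hh : ContDiff ℝ 1 h)
    (hineq : ∀ t, 0 ≤ t →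
      0 ≤ fderiv ℝ h (x t, t) (deriv x t, 1) + γ (h (x t, t))) :
    (∀ z : ℝ → ℝ, z 0 = h (x 0, 0) →
      (∀ t, 0 ≤ t → HasDerivWithinAt z (-γ (z t)) (Set.Ici 0) t) →
      ∀ t, 0 ≤ t → z t ≤ h (x t, t)) ∧
    0 ≤ Filter.liminf (fun t => h (x t, t)) Filter.atTop := by
  have hderiv : ∀ t, HasDerivAt (fun s => h (x s, s)) (fderiv ℝ h (x t, t) (deriv x t, 1)) t :=
    fun t => (hh.differentiable one_ne_zero _).hasFDerivAt.comp_hasDerivAt t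
      ((hx.differentiable one_ne_zero t).hasDerivAt.prodMk (hasDerivAt_id t))
  have hsuper : ∀ t ∈ Ici (0 : ℝ), -γ (h (x t, t)) ≤ fderiv ℝ h (x t, t) (deriv x t, 1) :=
    fun t ht => by linarith [hineq t ht]
  refine ⟨fun z hz0 hz t ht => ?_, ?_⟩
  · exact subsolution_le_supersolution_of_antitone hMono.monotone.neg hz (fun _ _ => le_rfl)
      (fun s _ => (hderiv s).hasDerivWithinAt) hsuper hz0.le ht
  · exact Real.liminf_nonneg_of_forall_eventually_neg_le fun ε hε =>
      eventually_neg_le_of_neg_comp_le_deriv hMono hγ0 hderiv hsuper hε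

/-- **Attractivity part of Lemma 3.2 (time-varying control barrier functions).**
Let `γ` be a locally Lipschitz extended class `K∞` function (continuous, strictly increasing,
`γ 0 = 0`, `γ(s) → ±∞` as `s → ±∞`). If for all `t ≥ 0`,
`∇ₓh(x(t),t)·ẋ(t) + ∂h/∂t(x(t),t) + γ(h(x(t),t)) ≥ 0` and `h(x(0),0) < 0`, then
`h(x(t),t) ≥ z(t)` for all `t ≥ 0` for (any, hence the unique) solution `z` of
`ż = −γ(z)`, `z(0) = h(x(0),0)`; in particular `liminf_{t→∞} h(x(t),t) ≥ 0`. -/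
theorem tv_cbf_attractivity {n : ℕ} {γ : ℝ → ℝ}
    (hLip : LocallyLipschitz γ) (hCont : Continuous γ)
    (hMono : StrictMono γ) (hγ0 : γ 0 = 0)
    (htop : Filter.Tendsto γ Filter.atTop Filter.atTop)
    (hbot : Filter.Tendsto γ Filter.atBot Filter.atBot)
    {x : ℝ → EuclideanSpace ℝ (Fin n)} (hx : ContDiff ℝ 1 x)
    {h : EuclideanSpace ℝ (Fin n) × ℝ → ℝ} (hh : ContDiff ℝ 1 h)
    (hineq : ∀ t, 0 ≤ t →
      0 ≤ fderiv ℝ h (x t, t) (deriv x t, 1) + γ (h (x t, t)))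
    (h0 : h (x 0, 0) < 0) :
    (∀ z : ℝ → ℝ, z 0 = h (x 0, 0) →
      (∀ t, 0 ≤ t → HasDerivWithinAt z (-γ (z t)) (Set.Ici 0) t) →
      ∀ t, 0 ≤ t → z t ≤ h (x t, t)) ∧
    0 ≤ Filter.liminf (fun t => h (x t, t)) Filter.atTop :=
  tv_cbf_attractivity_general hMono hγ0 hx hh hineq
end

section
/- Let I be a finite nonempty index set of agents with continuously differentiable trajectories xᵢ : [0,∞) → ℝᵈ, and let (Nᵢ)_{i∈I} be neighbor sets satisfying i ∉ Nᵢ and the symmetry j ∈ Nᵢ ⟺ i ∈ Nⱼ. For each pair with j ∈ Nᵢ let J_{ij} : (0,∞) → [0,∞) be continuously differentiable with J_{ij} = J_{ji}. Define Jᵢ(x) = ∑_{j∈Nᵢ} J_{ij}(‖xᵢ − xⱼ‖) and J(x) = ∑_{i∈I} Jᵢ(x). Assume xᵢ(t) ≠ xⱼ(t) for all t ≥ 0 and all j ∈ Nᵢ, let α : [0,a) → ℝ be a locally Lipschitz subadditive class K function, and assume J(x(0)) < a. If for every i ∈ I and every t ≥ 0, ∇_{xᵢ}Jᵢ(x(t))·ẋᵢ(t)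 ≤ −α(Jᵢ(x(t))), then J(x(t)) → 0 as t → ∞. -/
/-!
Since `J i j = J j i` and the neighbour relation is symmetric, every pairwise term of the total
cost `J` that involves agent `m` occurs twice, once in `Jₘ` and once in some `Jⱼ`, and the remaining
terms do not depend on `xₘ`. Hence the partial derivative of `J` in the block `xₘ` is twice that
of `Jₘ`, and summing the agents' constraints gives `dJ/dt ≤ -2 ∑ₘ α(Jₘ) ≤ -2 α(J)` by
subadditivity, as long as `J < a`. A scalar comparison argument finishes: `J` can never reach `a`,
so it is nonincreasing, and if it stayed above some `ε > 0` it would decrease at rate at least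
`α ε` forever, which is impossible for a nonnegative function.
-/

open Set Filter Topology Finset

theorem StrictMonoOn.pos_of_map_zero {a r : ℝ} {α : ℝ → ℝ} (hmono : StrictMonoOn α (Ico 0 a))
    (hα0 : α 0 = 0) (hr : r ∈ Ioo 0 a) : 0 < α r :=
  hα0 ▸ hmono ⟨le_rfl, hr.1.trans hr.2⟩ (Ioo_subset_Ico_self hr) hr.1

theorem StrictMonoOn.nonneg_of_map_zero {a r : ℝ} {α : ℝ → ℝ} (hmono : StrictMonoOn α (Ico 0 a))
    (hα0 : α 0 = 0) (hr : r ∈ Ico 0 a) : 0 ≤ α r := by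
  rcases hr.1.eq_or_lt with rfl | hpos
  · exact hα0.ge
  · exact (hmono.pos_of_map_zero hα0 ⟨hpos, hr.2⟩).le

section Comparison

variable {a : ℝ} {α V : ℝ → ℝ}

theorem lt_of_deriv_le_neg (hmono : StrictMonoOn α (Ico 0 a)) (hα0 : α 0 = 0)
    (hVd : ∀ t, 0 ≤ t → DifferentiableAt ℝ V t) (hV_nonneg : ∀ t, 0 ≤ t → 0 ≤ V t)
    (hV0 : V 0 < a) (hV' : ∀ t, 0 ≤ t → V t < a → deriv V t ≤ -α (V t))
    {t : ℝ} (ht : 0 ≤ t) : V t < a := by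
  -- `V` can never climb to the level `c ∈ (V 0, a)`, where it would be strictly decreasing.
  obtain ⟨c, hV0c, hca⟩ := exists_between hV0
  have hc : c ∈ Ioo 0 a := ⟨(hV_nonneg 0 le_rfl).trans_lt hV0c, hca⟩
  have hVt : V t ≤ c := by
    refine image_le_of_deriv_right_lt_deriv_boundary' (f' := deriv V) (B' := fun _ => 0)
      (fun s hs => (hVd s hs.1).continuousAt.continuousWithinAt)
      (fun s hs => (hVd s hs.1).hasDerivAt.hasDerivWithinAt) hV0c.le continuousOn_const
      (fun s _ => hasDerivWithinAt_const _ _ _) (fun s hs hVs => ?_) ⟨ht, le_rfl⟩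
    have hdec := hV' s hs.1 (hVs ▸ hca)
    rw [hVs] at hdec
    exact hdec.trans_lt (neg_neg_of_pos (hmono.pos_of_map_zero hα0 hc))
  exact hVt.trans_lt hc.2

theorem antitoneOn_of_deriv_le_neg (hmono : StrictMonoOn α (Ico 0 a)) (hα0 : α 0 = 0)
    (hVd : ∀ t, 0 ≤ t → DifferentiableAt ℝ V t) (hV_nonneg : ∀ t, 0 ≤ t → 0 ≤ V t)
    (hV0 : V 0 < a) (hV' : ∀ t, 0 ≤ t → V t < a → deriv V t ≤ -α (V t)) :
    AntitoneOn V (Ici 0) := by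
  have hlt := fun t (ht : 0 ≤ t) => lt_of_deriv_le_neg hmono hα0 hVd hV_nonneg hV0 hV' ht
  refine antitoneOn_of_deriv_nonpos (convex_Ici 0)
    (fun t ht => (hVd t ht).continuousAt.continuousWithinAt)
    (fun t ht => (hVd t (interior_subset ht)).differentiableWithinAt) fun t ht => ?_
  rw [interior_Ici] at ht
  have hα := hmono.nonneg_of_map_zero hα0 ⟨hV_nonneg t ht.le, hlt t ht.le⟩
  linarith [hV' t ht.le (hlt t ht.le)]

theorem exists_lt_of_deriv_le_neg (hmono : StrictMonoOn α (Ico 0 a)) (hα0 : α 0 = 0)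
    (hVd : ∀ t, 0 ≤ t → DifferentiableAt ℝ V t) (hV_nonneg : ∀ t, 0 ≤ t → 0 ≤ V t)
    (hV0 : V 0 < a) (hV' : ∀ t, 0 ≤ t → V t < a → deriv V t ≤ -α (V t))
    {ε : ℝ} (hε : 0 < ε) : ∃ T, 0 ≤ T ∧ V T < ε := by
  by_contra! hbig
  have hlt := fun t (ht : 0 ≤ t) => lt_of_deriv_le_neg hmono hα0 hVd hV_nonneg hV0 hV' ht
  -- While `V ≥ ε`, it decreases at rate at least `α ε > 0`, so it would turn negative.
  have hαε : 0 < α ε := hmono.pos_of_map_zero hα0 ⟨hε, (hbig 0 le_rfl).trans_lt hV0⟩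
  have hrate : ∀ t ∈ interior (Ici (0 : ℝ)), deriv V t ≤ -α ε := by
    intro t ht
    rw [interior_Ici] at ht
    have := hmono.monotoneOn ⟨hε.le, (hbig t ht.le).trans_lt (hlt t ht.le)⟩
      ⟨hV_nonneg t ht.le, hlt t ht.le⟩ (hbig t ht.le)
    linarith [hV' t ht.le (hlt t ht.le)]
  set T := V 0 / α ε + 1
  have hT : 0 ≤ T := by have := hV_nonneg 0 le_rfl; positivity
  have hdrop := (convex_Ici 0).image_sub_le_mul_sub_of_deriv_le
    (fun t ht => (hVd t ht).continuousAt.continuousWithinAt)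
    (fun t ht => (hVd t (interior_subset ht)).differentiableWithinAt) hrate 0 self_mem_Ici T hT hT
  have hαT : α ε * T = V 0 + α ε := by simp only [T]; field_simp
  linarith [hV_nonneg T hT]

theorem tendsto_zero_of_deriv_le_neg (hmono : StrictMonoOn α (Ico 0 a)) (hα0 : α 0 = 0)
    (hVd : ∀ t, 0 ≤ t → DifferentiableAt ℝ V t) (hV_nonneg : ∀ t, 0 ≤ t → 0 ≤ V t)
    (hV0 : V 0 < a) (hV' : ∀ t, 0 ≤ t → V t < a → deriv V t ≤ -α (V t)) :
    Tendsto V atTop (𝓝 0) := by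
  refine Metric.tendsto_atTop.2 fun ε hε => ?_
  obtain ⟨T, hT, hVT⟩ := exists_lt_of_deriv_le_neg hmono hα0 hVd hV_nonneg hV0 hV' hε
  refine ⟨T, fun t htT => ?_⟩
  have ht : 0 ≤ t := hT.trans htT
  have := antitoneOn_of_deriv_le_neg hmono hα0 hVd hV_nonneg hV0 hV' hT ht htT
  rw [Real.dist_0_eq_abs, abs_of_nonneg (hV_nonneg t ht)]
  exact this.trans_lt hVT

end Comparison

theorem SubadditiveOn.map_sum_le {ι : Type*} {a : ℝ} {α : ℝ → ℝ} (hsub : SubadditiveOn a α)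
    (hα0 : α 0 = 0) {s : Finset ι} {c : ι → ℝ} (hc : ∀ i ∈ s, 0 ≤ c i) (hsum : ∑ i ∈ s, c i < a) :
    α (∑ i ∈ s, c i) ≤ ∑ i ∈ s, α (c i) := by
  classical
  induction s using Finset.induction_on with
  | empty => simp [hα0]
  | insert i s hi ih =>
    rw [sum_insert hi] at hsum ⊢
    rw [sum_insert hi]
    have hcs : 0 ≤ ∑ j ∈ s, c j := sum_nonneg fun j hj => hc j (mem_insert_of_mem hj)
    have hci : 0 ≤ c i := hc i (mem_insert_self i s)
    calc α (c i + ∑ j ∈ s, c j) ≤ α (c i) + α (∑ j ∈ s, c j) :=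
          hsub _ _ ⟨hci, by linarith⟩ ⟨hcs, by linarith⟩ ⟨add_nonneg hci hcs, hsum⟩
      _ ≤ α (c i) + ∑ j ∈ s, α (c j) := by
          gcongr
          exact ih (fun j hj => hc j (mem_insert_of_mem hj)) (by linarith)

theorem sum_sum_neighbors_eq_two_nsmul_add {ι M : Type*} [Fintype ι] [DecidableEq ι]
    [AddCommMonoid M] {N : ι → Finset ι} (hself : ∀ i, i ∉ N i)
    (hNsymm : ∀ i j, j ∈ N i ↔ i ∈ N j) {f : ι → ι → M}
    (hf : ∀ i j, j ∈ N i → f i j = f j i) (m : ι) :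
    ∑ i, ∑ j ∈ N i, f i j =
      2 • ∑ j ∈ N m, f m j + ∑ i ∈ univ.erase m, ∑ j ∈ (N i).erase m, f i j := by
  have hsplit : ∀ i ∈ univ.erase m, ∑ j ∈ N i, f i j =
      (if i ∈ N m then f m i else 0) + ∑ j ∈ (N i).erase m, f i j := by
    intro i _
    split_ifs with hi
    · have hm : m ∈ N i := (hNsymm m i).1 hi
      rw [← hf i m hm, add_sum_erase _ _ hm]
    · rw [zero_add, erase_eq_of_notMem fun hm => hi ((hNsymm i m).1 hm)]
  have hNm : univ.erase m ∩ N m = N m :=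
    inter_eq_right.2 fun i hi => mem_erase.2 ⟨fun h => hself m (h ▸ hi), mem_univ i⟩
  rw [← add_sum_erase _ _ (mem_univ m), sum_congr rfl hsplit, sum_add_distrib, sum_ite_mem, hNm,
    two_nsmul, add_assoc]

theorem HasFDerivAt.apply_single_eq_mul_of_eq_mul_add {ι E : Type*} [Fintype ι]
    [DecidableEq ι] [NormedAddCommGroup E] [NormedSpace ℝ E]
    {F G R : (ι → E) → ℝ} {F' G' : (ι → E) →L[ℝ] ℝ} {p : ι → E} {m : ι} {c : ℝ}
    (hF : HasFDerivAt F F' p) (hG : HasFDerivAt G G' p) (hFGR : ∀ y, F y = c * G y + R y)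
    (hR : ∀ y z, R (Function.update y m z) = R y) (w : E) :
    F' (Pi.single m w) = c * G' (Pi.single m w) := by
  -- Along the line through `p` in direction `Pi.single m w`, the term `R` is constant.
  have hline : ∀ s : ℝ, p + s • (Pi.single m w : ι → E) = Function.update p m (p m + s • w) := by
    intro s
    funext k
    rcases eq_or_ne k m with rfl | hk
    · simp
    · simp [hk]
  have hG' : HasLineDerivAt ℝ F (c * G' (Pi.single m w)) p (Pi.single m w) := by
    have := ((hG.hasLineDerivAt (Pi.single m w)).const_mul c).add_const (R p)
    refine this.congr_of_eventuallyEq (Filter.Eventually.of_forall fun s => ?_)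
    simp only [hFGR, hline, hR]
  exact (hF.hasLineDerivAt _).unique hG'

section Costs

variable {ι E : Type*} [NormedAddCommGroup E] (N : ι → Finset ι) (J : ι → ι → ℝ → ℝ)

def localCost (i : ι) (y : ι → E) : ℝ :=
  ∑ j ∈ N i, J i j ‖y i - y j‖

def totalCost [Fintype ι] (y : ι → E) : ℝ :=
  ∑ i, localCost N J i y

variable {N J}

theorem localCost_nonneg (hJ : ∀ i, ∀ j ∈ N i, ∀ s, 0 < s → 0 ≤ J i j s) {y : ι → E}
    (hy : ∀ i, ∀ j ∈ N i, y i ≠ y j) (i : ι) : 0 ≤ localCost N J i y :=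
  sum_nonneg fun j hj => hJ i j hj _ (norm_pos_iff.2 (sub_ne_zero.2 (hy i j hj)))

theorem totalCost_nonneg [Fintype ι] (hJ : ∀ i, ∀ j ∈ N i, ∀ s, 0 < s → 0 ≤ J i j s) {y : ι → E}
    (hy : ∀ i, ∀ j ∈ N i, y i ≠ y j) : 0 ≤ totalCost N J y :=
  sum_nonneg fun i _ => localCost_nonneg hJ hy i

theorem totalCost_eq_two_mul_localCost_add [Fintype ι] [DecidableEq ι] (hself : ∀ i, i ∉ N i)
    (hNsymm : ∀ i j, j ∈ N i ↔ i ∈ N j) (hJ : ∀ i j, j ∈ N i → J i j = J j i) (m : ι)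
    (y : ι → E) :
    totalCost N J y =
      2 * localCost N J m y + ∑ i ∈ univ.erase m, ∑ j ∈ (N i).erase m, J i j ‖y i - y j‖ := by
  simp only [totalCost, localCost, two_mul, ← two_nsmul]
  exact sum_sum_neighbors_eq_two_nsmul_add hself hNsymm
    (fun i j hj => by rw [hJ i j hj, norm_sub_rev]) m

theorem differentiableAt_localCost [Fintype ι] [InnerProductSpace ℝ E]
    (hJ : ∀ i, ∀ j ∈ N i, DifferentiableOn ℝ (J i j) (Ioi 0))
    {p : ι → E} (hp : ∀ i, ∀ j ∈ N i, p i ≠ p j) (i : ι) :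
    DifferentiableAt ℝ (localCost N J i) p := by
  refine DifferentiableAt.fun_sum fun j hj => ?_
  have hpij : p i - p j ≠ 0 := sub_ne_zero.2 (hp i j hj)
  exact ((hJ i j hj).differentiableAt (isOpen_Ioi.mem_nhds (norm_pos_iff.2 hpij))).comp p
    (((differentiableAt_apply i p).sub (differentiableAt_apply j p)).norm ℝ hpij)

theorem differentiableAt_totalCost [Fintype ι] [InnerProductSpace ℝ E]
    (hJ : ∀ i, ∀ j ∈ N i, DifferentiableOn ℝ (J i j) (Ioi 0))
    {p : ι → E} (hp : ∀ i, ∀ j ∈ N i, p i ≠ p j) : DifferentiableAt ℝ (totalCost N J) p :=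
  DifferentiableAt.fun_sum fun i _ => differentiableAt_localCost hJ hp i

theorem fderiv_totalCost_apply [Fintype ι] [DecidableEq ι] [InnerProductSpace ℝ E]
    (hself : ∀ i, i ∉ N i) (hNsymm : ∀ i j, j ∈ N i ↔ i ∈ N j)
    (hJsymm : ∀ i j, j ∈ N i → J i j = J j i)
    (hJ : ∀ i, ∀ j ∈ N i, DifferentiableOn ℝ (J i j) (Ioi 0))
    {p : ι → E} (hp : ∀ i, ∀ j ∈ N i, p i ≠ p j) (v : ι → E) :
    fderiv ℝ (totalCost N J) p v = ∑ m, 2 * fderiv ℝ (localCost N J m) p (Pi.single m (v m)) := by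
  conv_lhs => rw [← univ_sum_single v, map_sum]
  refine sum_congr rfl fun m _ => ?_
  refine (differentiableAt_totalCost hJ hp).hasFDerivAt.apply_single_eq_mul_of_eq_mul_add
    (differentiableAt_localCost hJ hp m).hasFDerivAt
    (totalCost_eq_two_mul_localCost_add hself hNsymm hJsymm m) (fun y z => ?_) (v m)
  refine sum_congr rfl fun i hi => sum_congr rfl fun j hj => ?_
  rw [Function.update_of_ne (ne_of_mem_erase hi), Function.update_of_ne (ne_of_mem_erase hj)]

theorem deriv_totalCost_comp_le [Fintype ι] [DecidableEq ι] [InnerProductSpace ℝ E]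
    (hself : ∀ i, i ∉ N i) (hNsymm : ∀ i j, j ∈ N i ↔ i ∈ N j)
    (hJsymm : ∀ i j, j ∈ N i → J i j = J j i)
    (hJd : ∀ i, ∀ j ∈ N i, DifferentiableOn ℝ (J i j) (Ioi 0))
    (hJnn : ∀ i, ∀ j ∈ N i, ∀ s, 0 < s → 0 ≤ J i j s) {a : ℝ} {α : ℝ → ℝ} (hα0 : α 0 = 0)
    (hsub : SubadditiveOn a α) {x : ℝ → ι → E} {t : ℝ} (hxt : DifferentiableAt ℝ x t)
    (hsep : ∀ i, ∀ j ∈ N i, x t i ≠ x t j) (hlt : totalCost N J (x t) < a)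
    (hcon : ∀ i, fderiv ℝ (localCost N J i) (x t) (Pi.single i (deriv x t i)) ≤
      -α (localCost N J i (x t))) :
    deriv (fun s => totalCost N J (x s)) t ≤ -(2 * α (totalCost N J (x t))) := by
  have hV : HasDerivAt (fun s => totalCost N J (x s)) _ t :=
    (differentiableAt_totalCost hJd hsep).hasFDerivAt.comp_hasDerivAt t hxt.hasDerivAt
  have hsubadd := hsub.map_sum_le hα0 (fun m _ => localCost_nonneg hJnn hsep m) hlt
  rw [hV.deriv, fderiv_totalCost_apply hself hNsymm hJsymm hJd hsep]
  calc ∑ m, 2 * fderiv ℝ (localCost N J m) (x t) (Pi.single m (deriv x t m))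
      ≤ ∑ m, 2 * -α (localCost N J m (x t)) := sum_le_sum fun m _ => by linarith [hcon m]
    _ = -(2 * ∑ m, α (localCost N J m (x t))) := by rw [mul_sum, ← sum_neg_distrib]; simp
    _ ≤ -(2 * α (totalCost N J (x t))) := by unfold totalCost; linarith

end Costs

theorem constraint_driven_convergence_general {ι : Type*} [Fintype ι] [DecidableEq ι]
    {d : ℕ} {N : ι → Finset ι} (hself : ∀ i, i ∉ N i)
    (hNsymm : ∀ i j, j ∈ N i ↔ i ∈ N j)
    {J : ι → ι → ℝ → ℝ}
    (hJC : ∀ i j, j ∈ N i → ContDiffOn ℝ 1 (J i j) (Set.Ioi 0))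
    (hJnn : ∀ i j, j ∈ N i → ∀ s : ℝ, 0 < s → 0 ≤ J i j s)
    (hJsymm : ∀ i j, J i j = J j i)
    {x : ℝ → ι → EuclideanSpace ℝ (Fin d)} (hx : ContDiff ℝ 1 x)
    (hsep : ∀ t : ℝ, 0 ≤ t → ∀ i, ∀ j ∈ N i, x t i ≠ x t j)
    {a : ℝ} {α : ℝ → ℝ}
    (hK : IsClassKOn a α)
    (hsub : SubadditiveOn a α)
    (hJ0 : (∑ k, ∑ j ∈ N k, J k j ‖x 0 k - x 0 j‖) < a)
    (hcon : ∀ i, ∀ t : ℝ, 0 ≤ t →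
      fderiv ℝ (fun y : ι → EuclideanSpace ℝ (Fin d) =>
          ∑ j ∈ N i, J i j ‖y i - y j‖) (x t) (Pi.single i (deriv x t i)) ≤
        -α (∑ j ∈ N i, J i j ‖x t i - x t j‖)) :
    Filter.Tendsto (fun t => ∑ k, ∑ j ∈ N k, J k j ‖x t k - x t j‖)
      Filter.atTop (nhds 0) := by
  have hJd := fun i j hj => (hJC i j hj).differentiableOn one_ne_zero
  refine tendsto_zero_of_deriv_le_neg (V := fun t => totalCost N J (x t)) hK.2.1 hK.2.2
    (fun t ht => ?_) (fun t ht => totalCost_nonneg hJnn (hsep t ht)) hJ0 (fun t ht hlt => ?_)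
  · exact (differentiableAt_totalCost hJd (hsep t ht)).comp t (hx.differentiable one_ne_zero t)
  · have hdec := deriv_totalCost_comp_le hself hNsymm (fun i j _ => hJsymm i j) hJd hJnn hK.2.2
      hsub (hx.differentiable one_ne_zero t) (hsep t ht) hlt (fun i => hcon i t ht)
    have hα := hK.2.1.nonneg_of_map_zero hK.2.2 ⟨totalCost_nonneg hJnn (hsep t ht), hlt⟩
    linarith

/-- **Proposition A.1 (refinement of Proposition 8 of Notomista–Egerstedt).**
For symmetric pairwise costs `J_{ij}(‖xᵢ − xⱼ‖) = J_{ji}(‖xⱼ − xᵢ‖)` over an undirected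
graph, with `Jᵢ(x) = ∑_{j∈Nᵢ} J_{ij}(‖xᵢ − xⱼ‖)` and `J = ∑ᵢ Jᵢ`, `J(x(0)) < a`, if each
agent enforces `∇_{xᵢ}Jᵢ(x(t))·ẋᵢ(t) ≤ −α(Jᵢ(x(t)))` for all `t ≥ 0`, where `α` is a locally
Lipschitz subadditive class `K` function on `[0, a)`, then `J(x(t)) → 0` as `t → ∞`. -/
theorem constraint_driven_convergence {ι : Type*} [Fintype ι] [Nonempty ι] [DecidableEq ι]
    {d : ℕ} {N : ι → Finset ι} (hself : ∀ i, i ∉ N i)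
    (hNsymm : ∀ i j, j ∈ N i ↔ i ∈ N j)
    {J : ι → ι → ℝ → ℝ}
    (hJC : ∀ i j, j ∈ N i → ContDiffOn ℝ 1 (J i j) (Set.Ioi 0))
    (hJnn : ∀ i j, j ∈ N i → ∀ s : ℝ, 0 < s → 0 ≤ J i j s)
    (hJsymm : ∀ i j, J i j = J j i)
    {x : ℝ → ι → EuclideanSpace ℝ (Fin d)} (hx : ContDiff ℝ 1 x)
    (hsep : ∀ t : ℝ, 0 ≤ t → ∀ i, ∀ j ∈ N i, x t i ≠ x t j)
    {a : ℝ} (ha : 0 < a) {α : ℝ → ℝ}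
    (hK : IsClassKOn a α) (hLip : LocallyLipschitzOn (Set.Ico 0 a) α)
    (hsub : SubadditiveOn a α)
    (hJ0 : (∑ k, ∑ j ∈ N k, J k j ‖x 0 k - x 0 j‖) < a)
    (hcon : ∀ i, ∀ t : ℝ, 0 ≤ t →
      fderiv ℝ (fun y : ι → EuclideanSpace ℝ (Fin d) =>
          ∑ j ∈ N i, J i j ‖y i - y j‖) (x t) (Pi.single i (deriv x t i)) ≤
        -α (∑ j ∈ N i, J i j ‖x t i - x t j‖)) :
    Filter.Tendsto (fun t => ∑ k, ∑ j ∈ N k, J k j ‖x t k - x t j‖)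
      Filter.atTop (nhds 0) :=
  constraint_driven_convergence_general hself hNsymm hJC hJnn hJsymm hx hsep hK hsub hJ0 hcon
end
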